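/- arXiv:math/0611923 — 2 statements merged into one kernel-verified Lean document; each statement's English description precedes it below -/
import Mathlib

section
/- For every n ≥ 1, the number of permutations π ∈ S_n that avoid the generalized pattern 12-3 and satisfy π_1 = n equals the Bell number B_{n-1}; and for every k with 1 ≤ k ≤ n-1, the number of permutations π ∈ S_n that avoid 12-3 and satisfy π_1 = k equals ∇^{n-k-1}(B_{n-1}) = Σ_{i=0}^{n-k-1} (-1)^i · C(n-k-1, i) · B_{n-1-i}. -/
/-- `π` avoids the generalized pattern 12-3. -/
def Avoids12d3 {n : ℕ} (π : Equiv.Perm (Fin n)) : Prop :=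
  ¬ ∃ (i j : Fin n) (h : i.1 + 1 < n), i.1 + 1 < j.1 ∧ π i < π ⟨i.1 + 1, h⟩ ∧ π ⟨i.1 + 1, h⟩ < π j

/-- The `m`-th Bell number: the number of partitions of a set with `m` elements,
equivalently the number of equivalence relations (setoids) on `Fin m`. -/
noncomputable def bell (m : ℕ) : ℕ := Nat.card (Setoid (Fin m))

/-!
Deleting the first entry `k` of a permutation and standardising the rest is a bijection from the
12-3-avoiders of `Fin (p + 2)` starting with `k` onto the 12-3-avoiders `σ` of `Fin (p + 1)` with
`σ 0 < k` or `σ 0` maximal (otherwise `k, σ 0, max` is an occurrence). Hence the number `a p v` of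
avoiders of `Fin (p + 1)` with first value `v` satisfies `a (p + 1) k = ∑_{v < k} a p v + a p p`,
and induction gives `a p p = B p` and `a p v = Δ^(p-1-v) B (v + 1)`, i.e. `∇^(p-1-v) B p`: the
partial sums telescope because `Δ^p B 1 = B p`, the binomial inversion of the Bell recurrence
`B (n + 1) = ∑ C(n, k) B k`.
-/

open Finset Function Equiv fwdDiff

instance Setoid.finite {α : Type*} [Finite α] : Finite (Setoid α) :=
  Finite.of_injective (fun r : Setoid α => ⇑r) fun _ _ h =>
    Setoid.ext fun a b => iff_of_eq (congrFun (congrFun h a) b)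

def Equiv.setoidCongr {α β : Type*} (e : α ≃ β) : Setoid α ≃ Setoid β where
  toFun r := r.comap e.symm
  invFun r := r.comap e
  left_inv r := Setoid.ext fun a b => by simp [Setoid.comap_rel]
  right_inv r := Setoid.ext fun a b => by simp [Setoid.comap_rel]

theorem Nat.card_setoid_eq_bell (α : Type*) [Fintype α] :
    Nat.card (Setoid α) = bell (Fintype.card α) :=
  Nat.card_congr (Fintype.equivFin α).setoidCongr

namespace Setoid

variable {α : Type*}

-- The elements outside `s` are merged into the class of `none`.
def optionClass [DecidableEq α] (s : Finset α) (t : Setoid s) : Option α → Option (Quotient t)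
  | none => none
  | some x => if h : x ∈ s then some (Quotient.mk t ⟨x, h⟩) else none

open scoped Classical in
noncomputable def notRelNone [Fintype α] (r : Setoid (Option α)) : Finset α :=
  {x | ¬ r (some x) none}

variable [Fintype α] [DecidableEq α]

theorem notRelNone_ker_optionClass (s : Finset α) (t : Setoid s) :
    (ker (optionClass s t)).notRelNone = s := by
  ext x
  by_cases hx : x ∈ s <;> simp [notRelNone, optionClass, ker_def, hx]

theorem ker_optionClass_notRelNone (r : Setoid (Option α)) :
    ker (optionClass r.notRelNone (r.comap fun x => some x.1)) = r := by
  ext a b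
  rcases a with _ | x <;> rcases b with _ | y
  · simp
  · by_cases hy : r (some y) none <;> simp [optionClass, notRelNone, ker_def, hy]
    exacts [r.symm' hy, fun h => hy (r.symm' h)]
  · by_cases hx : r (some x) none <;> simp [optionClass, notRelNone, ker_def, hx]
  · by_cases hx : r (some x) none <;> by_cases hy : r (some y) none <;>
      simp [optionClass, notRelNone, ker_def, hx, hy, Quotient.eq, comap_rel]
    exacts [r.trans' hx (r.symm' hy), fun h => hy (r.trans' (r.symm' h) hx),
      fun h => hx (r.trans' h hy)]

def optionFiberEquiv (s : Finset α) : {r : Setoid (Option α) // r.notRelNone = s} ≃ Setoid s where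
  toFun r := r.1.comap fun x => some x.1
  invFun t := ⟨ker (optionClass s t), notRelNone_ker_optionClass s t⟩
  left_inv := by
    rintro ⟨r, rfl⟩
    exact Subtype.ext (ker_optionClass_notRelNone r)
  right_inv t := Setoid.ext fun x y => by simp [optionClass, ker_def, Quotient.eq]

end Setoid

theorem Nat.card_setoid_option (α : Type*) [Fintype α] :
    Nat.card (Setoid (Option α)) =
      ∑ k ∈ range (Fintype.card α + 1), (Fintype.card α).choose k * bell k := by
  classical
  calc Nat.card (Setoid (Option α))
      = Nat.card (Σ s : Finset α, {r : Setoid (Option α) // r.notRelNone = s}) :=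
        Nat.card_congr (Equiv.sigmaFiberEquiv _).symm
    _ = ∑ s : Finset α, bell #s := by
        rw [Nat.card_sigma]
        refine sum_congr rfl fun s _ => ?_
        rw [Nat.card_congr (Setoid.optionFiberEquiv s), Nat.card_setoid_eq_bell, Fintype.card_coe]
    _ = _ := by
        rw [← powerset_univ, sum_powerset_apply_card, Finset.card_univ]
        simp only [smul_eq_mul]

theorem bell_zero : bell 0 = 1 :=
  Nat.card_eq_one_iff_unique.2 ⟨⟨fun _ _ => Setoid.ext fun a => a.elim0⟩, ⟨⊥⟩⟩

theorem bell_succ (n : ℕ) : bell (n + 1) = ∑ k ∈ range (n + 1), n.choose k * bell k := by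
  rw [bell, Nat.card_congr (finSuccEquiv n).setoidCongr, Nat.card_setoid_option, Fintype.card_fin]

theorem fwdDiff_iter_succ_apply {M G : Type*} [AddCommMonoid M] [AddCommGroup G] (h : M)
    (f : M → G) (n : ℕ) (y : M) :
    Δ_[h] ^[n + 1] f y = Δ_[h] ^[n] f (y + h) - Δ_[h] ^[n] f y := by
  rw [iterate_succ_apply']
  rfl

theorem fwdDiff_iter_eq_sum_sub {G : Type*} [AddCommGroup G] (f : ℕ → G) (j x : ℕ) :
    Δ_[1] ^[j] f x = ∑ i ∈ range (j + 1), ((-1 : ℤ) ^ i * j.choose i) • f (x + j - i) := by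
  rw [fwdDiff_iter_eq_sum_shift, ← sum_range_reflect]
  refine sum_congr rfl fun i hi => ?_
  have hi : i ≤ j := Nat.lt_succ_iff.1 (mem_range.1 hi)
  rw [add_tsub_cancel_right, Nat.sub_sub_self hi, Nat.choose_symm hi, smul_eq_mul, mul_one,
    ← Nat.add_sub_assoc hi]

-- Both the Gregory–Newton formula and the Bell recurrence expand `B (n + 1)` in the basis
-- `C(n, k)`, `k ≤ n`; comparing the top coefficients gives the claim by strong induction.
theorem fwdDiff_iter_bell_one (n : ℕ) : Δ_[1] ^[n] (fun k => (bell k : ℤ)) 1 = bell n := by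
  induction n using Nat.strong_induction_on with
  | _ n ih =>
  have newton := shift_eq_sum_fwdDiff_iter 1 (fun k => (bell k : ℤ)) n 1
  have recurrence : (bell (n + 1) : ℤ) = ∑ k ∈ range (n + 1), (n.choose k : ℤ) * bell k := by
    exact_mod_cast bell_succ n
  rw [sum_range_succ, sum_congr rfl fun k hk => by rw [ih k (mem_range.1 hk)]] at newton
  rw [sum_range_succ] at recurrence
  simp only [smul_eq_mul, mul_one, nsmul_eq_mul, Nat.choose_self, Nat.cast_one, one_mul,
    add_comm 1 n] at newton recurrence
  linarith

theorem Nat.card_subtype_and_mem_eq_sum {ι κ : Type*} [Finite ι] (P : ι → Prop) (g : ι → κ)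
    (s : Finset κ) : Nat.card {x // P x ∧ g x ∈ s} = ∑ v ∈ s, Nat.card {x // P x ∧ g x = v} := by
  classical
  have := Fintype.ofFinite ι
  simp only [Nat.card_eq_fintype_card, Fintype.card_subtype]
  rw [card_eq_sum_card_fiberwise (f := g) (t := s) fun x hx => (mem_filter.1 hx).2.2]
  refine sum_congr rfl fun v hv => ?_
  rw [filter_filter]
  exact congrArg card <| filter_congr fun x _ =>
    ⟨fun ⟨⟨hP, _⟩, hg⟩ => ⟨hP, hg⟩, fun ⟨hP, hg⟩ => ⟨⟨hP, hg ▸ hv⟩, hg⟩⟩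

def HasPattern12d3 {α : Type*} [LT α] {n : ℕ} (f : Fin n → α) : Prop :=
  ∃ (i j : Fin n) (h : i.1 + 1 < n), i.1 + 1 < j.1 ∧ f i < f ⟨i.1 + 1, h⟩ ∧ f ⟨i.1 + 1, h⟩ < f j

theorem hasPattern12d3_comp_iff {α β : Type*} [LinearOrder α] [Preorder β] {n : ℕ} {g : α → β}
    (hg : StrictMono g) (f : Fin n → α) : HasPattern12d3 (g ∘ f) ↔ HasPattern12d3 f := by
  simp only [HasPattern12d3, comp_apply, hg.lt_iff_lt]

theorem hasPattern12d3_cons {α : Type*} [LT α] {n : ℕ} (a : α) (f : Fin (n + 1) → α) :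
    HasPattern12d3 (Fin.cons a f : Fin (n + 2) → α) ↔
      HasPattern12d3 f ∨ (a < f 0 ∧ ∃ j, 0 < j ∧ f 0 < f j) := by
  constructor
  · rintro ⟨i, j, h, hij, h₁, h₂⟩
    induction j using Fin.cases with
    | zero => simp at hij
    | succ j =>
      induction i using Fin.cases with
      | zero => exact Or.inr ⟨h₁, j, by rw [Fin.lt_def]; simp at hij ⊢; omega, h₂⟩
      | succ i => exact Or.inl ⟨i, j, by simpa using h, by simpa using hij, h₁, h₂⟩
  · rintro (⟨i, j, h, hij, h₁, h₂⟩ | ⟨h₁, j, hj, h₂⟩)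
    · exact ⟨i.succ, j.succ, by simpa using h, by simpa using hij, h₁, h₂⟩
    · rw [Fin.lt_def, Fin.val_zero] at hj
      exact ⟨0, j.succ, by simp only [Fin.val_zero]; omega,
        by simp only [Fin.val_zero, Fin.val_succ]; omega, h₁, h₂⟩

def Equiv.Perm.succAboveCons {m : ℕ} (k : Fin (m + 1)) :
    Perm (Fin m) ≃ {π : Perm (Fin (m + 1)) // π 0 = k} :=
  ((Equiv.refl _).equivCongr (finSuccAboveEquiv k)).trans <| (optionSubtype k).symm.trans <|
    (finSuccEquiv m).symm.equivCongr (Equiv.refl _) |>.subtypeEquiv fun e => by simp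

theorem Equiv.Perm.coe_succAboveCons {m : ℕ} (k : Fin (m + 1)) (σ : Perm (Fin m)) :
    ⇑(Perm.succAboveCons k σ : Perm (Fin (m + 1))) = Fin.cons k (k.succAbove ∘ σ) := by
  ext i
  induction i using Fin.cases with
  | zero => rfl
  | succ i => simp [Perm.succAboveCons, finSuccAboveEquiv_apply, Equiv.subtypeEquiv]

theorem avoids12d3_succAboveCons_iff {p : ℕ} (k : Fin (p + 2)) (σ : Perm (Fin (p + 1))) :
    Avoids12d3 (Perm.succAboveCons k σ : Perm (Fin (p + 2))) ↔
      Avoids12d3 σ ∧ ((σ 0 : ℕ) < k ∨ σ 0 = Fin.last p) := by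
  have exists_above : (∃ j, 0 < j ∧ σ 0 < σ j) ↔ σ 0 ≠ Fin.last p := by
    refine ⟨fun ⟨j, _, hj⟩ h => (h ▸ hj).not_ge (Fin.le_last _), fun h => ?_⟩
    refine ⟨σ.symm (Fin.last p), Fin.pos_iff_ne_zero.2 fun h0 => h ?_, ?_⟩
    · simpa using congrArg σ h0.symm
    · simpa using Fin.lt_last_iff_ne_last.2 h
  have hk := Fin.strictMono_succAbove k
  change ¬ HasPattern12d3 _ ↔ ¬ HasPattern12d3 σ ∧ _
  simp only [Perm.coe_succAboveCons, hasPattern12d3_cons, hasPattern12d3_comp_iff hk,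
    comp_apply, hk.lt_iff_lt, Fin.lt_succAbove_iff_le_castSucc, exists_above, Fin.le_def,
    Fin.val_castSucc, ne_eq, Fin.ext_iff, Fin.val_last, not_or]
  exact and_congr_right' (by omega)

noncomputable def avoid12d3Count (p v : ℕ) : ℕ :=
  Nat.card {π : Perm (Fin (p + 1)) // Avoids12d3 π ∧ (π 0 : ℕ) = v}

theorem card_avoids12d3_apply_zero_eq {p : ℕ} (j : Fin (p + 1)) :
    Nat.card {π : Perm (Fin (p + 1)) // Avoids12d3 π ∧ π 0 = j} = avoid12d3Count p j :=
  Nat.card_congr <| Equiv.subtypeEquivRight fun _ => by rw [Fin.ext_iff]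

theorem avoid12d3Count_zero : avoid12d3Count 0 0 = 1 := by
  rw [avoid12d3Count, Nat.card_eq_one_iff_unique]
  refine ⟨⟨fun _ _ => Subtype.ext (Subsingleton.elim (α := Perm (Fin 1)) _ _)⟩, ⟨⟨1, ?_, rfl⟩⟩⟩
  rintro ⟨i, j, h, -⟩
  omega

theorem avoid12d3Count_succ (p : ℕ) {k : ℕ} (hk : k ≤ p + 1) :
    avoid12d3Count (p + 1) k =
      ∑ v ∈ (range (p + 1)).filter (fun v => v < k ∨ v = p), avoid12d3Count p v := by
  have hk' : k < p + 2 := by omega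
  calc avoid12d3Count (p + 1) k
      = Nat.card {π : Perm (Fin (p + 2)) // π 0 = ⟨k, hk'⟩ ∧ Avoids12d3 π} := by
        rw [← card_avoids12d3_apply_zero_eq ⟨k, hk'⟩]
        exact Nat.card_congr <| Equiv.subtypeEquivRight fun _ => and_comm
    _ = Nat.card {σ : Perm (Fin (p + 1)) // Avoids12d3 σ ∧ ((σ 0 : ℕ) < k ∨ σ 0 = Fin.last p)} :=
        Nat.card_congr <| (Equiv.subtypeSubtypeEquivSubtypeInter _ _).symm.trans
          ((Perm.succAboveCons _).subtypeEquiv fun σ =>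
            (avoids12d3_succAboveCons_iff ⟨k, hk'⟩ σ).symm).symm
    _ = Nat.card {σ : Perm (Fin (p + 1)) //
          Avoids12d3 σ ∧ (σ 0 : ℕ) ∈ (range (p + 1)).filter (fun v => v < k ∨ v = p)} :=
        Nat.card_congr <| Equiv.subtypeEquivRight fun σ => by simp [Fin.ext_iff, (σ 0).isLt]
    _ = _ := Nat.card_subtype_and_mem_eq_sum _ _ _

theorem avoid12d3Count_succ_of_le {p k : ℕ} (hk : k ≤ p) :
    avoid12d3Count (p + 1) k = ∑ v ∈ range k, avoid12d3Count p v + avoid12d3Count p p := by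
  have hfilter : (range (p + 1)).filter (fun v => v < k ∨ v = p) = insert p (range k) := by
    ext v
    simp only [mem_filter, mem_range, mem_insert]
    omega
  rw [avoid12d3Count_succ p (by omega), hfilter, sum_insert (by simpa using hk), add_comm]

theorem avoid12d3Count_succ_self (p : ℕ) :
    avoid12d3Count (p + 1) (p + 1) = avoid12d3Count (p + 1) p := by
  rw [avoid12d3Count_succ p le_rfl, avoid12d3Count_succ p (by omega)]
  exact sum_congr (filter_congr fun v hv => by simp only [mem_range] at hv; omega) fun _ _ => rfl

theorem avoid12d3Count_closed_form (p : ℕ) :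
    (avoid12d3Count p p : ℤ) = bell p ∧
      ∀ v < p, (avoid12d3Count p v : ℤ) = Δ_[1] ^[p - 1 - v] (fun k => (bell k : ℤ)) (v + 1) := by
  induction p with
  | zero => simp [avoid12d3Count_zero, bell_zero]
  | succ p ih =>
    obtain ⟨htop, hbelow⟩ := ih
    have hpartial : ∀ k ≤ p, ∑ v ∈ range k, (avoid12d3Count p v : ℤ) + avoid12d3Count p p =
        Δ_[1] ^[p - k] (fun k => (bell k : ℤ)) (k + 1) := by
      intro k hk
      have telescope : ∀ v ∈ range k, (avoid12d3Count p v : ℤ) =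
          Δ_[1] ^[p - (v + 1)] (fun k => (bell k : ℤ)) (v + 1 + 1) -
            Δ_[1] ^[p - v] (fun k => (bell k : ℤ)) (v + 1) := by
        intro v hv
        have hv : v < k := mem_range.1 hv
        rw [hbelow v (by omega), show p - v = p - 1 - v + 1 by omega, fwdDiff_iter_succ_apply,
          show p - (v + 1) = p - 1 - v by omega]
        ring
      rw [sum_congr rfl telescope,
        sum_range_sub (fun v => Δ_[1] ^[p - v] (fun k => (bell k : ℤ)) (v + 1)), htop,
        ← fwdDiff_iter_bell_one p]
      simp
    refine ⟨?_, fun v hv => ?_⟩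
    · rw [avoid12d3Count_succ_self, avoid12d3Count_succ_of_le le_rfl]
      push_cast
      rw [hpartial p le_rfl]
      simp
    · rw [avoid12d3Count_succ_of_le (by omega)]
      push_cast
      rw [hpartial v (by omega)]

theorem bell_distribution (n : ℕ) (hn : 1 ≤ n) :
    Nat.card {π : Equiv.Perm (Fin n) // Avoids12d3 π ∧ π ⟨0, by omega⟩ = ⟨n - 1, by omega⟩} = bell (n - 1) ∧
    ∀ k : ℕ, (hk1 : 1 ≤ k) → (hk2 : k ≤ n - 1) →
      (Nat.card {π : Equiv.Perm (Fin n) // Avoids12d3 π ∧ π ⟨0, by omega⟩ = ⟨k - 1, by omega⟩} : ℤ) =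
        ∑ i ∈ Finset.range (n - k), (-1 : ℤ) ^ i * (((n - k - 1)).choose i) * (bell (n - 1 - i) : ℤ) := by
  obtain ⟨p, rfl⟩ : ∃ p, n = p + 1 := ⟨n - 1, by omega⟩
  obtain ⟨htop, hbelow⟩ := avoid12d3Count_closed_form p
  simp only [Fin.zero_eta, card_avoids12d3_apply_zero_eq, Nat.add_sub_cancel]
  refine ⟨by exact_mod_cast htop, fun k hk1 hk2 => ?_⟩
  rw [hbelow (k - 1) (by omega), fwdDiff_iter_eq_sum_sub,
    show p - 1 - (k - 1) + 1 = p + 1 - k by omega]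
  refine sum_congr rfl fun i _ => ?_
  rw [smul_eq_mul, show p - 1 - (k - 1) = p + 1 - k - 1 by omega,
    show k - 1 + 1 + (p + 1 - k - 1) - i = p - i by omega]
end

section
/- For every n ≥ 1 and every k with 1 ≤ k ≤ n, the number N of permutations π ∈ S_n that avoid the generalized pattern 2-31 and satisfy π_n = k is ((n-k+1)/n)·C(n+k-2, n-1); equivalently, n · N = (n-k+1) · C(n+k-2, n-1). -/
/-- `π` avoids the generalized pattern 2-31. -/
def Avoids2d31 {n : ℕ} (π : Equiv.Perm (Fin n)) : Prop :=
  ¬ ∃ (i j : Fin n) (h : j.1 + 1 < n), i < j ∧ π ⟨j.1 + 1, h⟩ < π i ∧ π i < π j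

/-!
Deleting the last entry of a permutation and standardizing the remaining values maps the
2-31-avoiders of length `m + 2` with last value `K` (values counted from `0`) bijectively onto
the 2-31-avoiders `σ` of length `m + 1` whose last value is at most `K`: an occurrence of 2-31
through the last two positions needs a value strictly between `K` and the penultimate value, and
one exists iff that penultimate value exceeds `K + 1`, i.e. iff `σ` ends above `K`. So the counts
`a m K` satisfy the ballot recursion `a (m+1) (K+1) = a (m+1) K + a m (K+1)`, which by Pascal's
rule is also satisfied by `C(m+K, m) - C(m+K, m+1) = (m+1-K)/(m+1) * C(m+K, m)`.
-/

open Equiv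

namespace Equiv.Perm

variable {n : ℕ}

def insertLast (p : Fin (n + 1)) (σ : Perm (Fin n)) : Perm (Fin (n + 1)) :=
  (finSuccEquiv' (Fin.last n)).trans (σ.optionCongr.trans (finSuccEquiv' p).symm)

@[simp]
theorem insertLast_castSucc (p : Fin (n + 1)) (σ : Perm (Fin n)) (i : Fin n) :
    insertLast p σ i.castSucc = p.succAbove (σ i) := by
  simp [insertLast, finSuccEquiv'_last_apply_castSucc]

@[simp]
theorem insertLast_last (p : Fin (n + 1)) (σ : Perm (Fin n)) :
    insertLast p σ (Fin.last n) = p := by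
  simp [insertLast]

theorem insertLast_injective (p : Fin (n + 1)) : Function.Injective (insertLast p) :=
  fun σ τ h => Equiv.ext fun i => by
    simpa using congrArg (fun π : Perm (Fin (n + 1)) => π i.castSucc) h

theorem exists_insertLast_eq {p : Fin (n + 1)} {π : Perm (Fin (n + 1))}
    (hπ : π (Fin.last n) = p) : ∃ σ, insertLast p σ = π := by
  set e : Perm (Option (Fin n)) :=
    (finSuccEquiv' (Fin.last n)).symm.trans (π.trans (finSuccEquiv' p))
  have he : e none = none := by simp [e, hπ]
  refine ⟨removeNone e, ?_⟩
  rw [insertLast, map_equiv_removeNone, he, swap_self]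
  ext1 x
  simp [e]

theorem avoids2d31_of_insertLast {p : Fin (n + 1)} {σ : Perm (Fin n)}
    (h : Avoids2d31 (insertLast p σ)) : Avoids2d31 σ := by
  rintro ⟨i, j, hj, hij, h₁, h₂⟩
  refine h ⟨i.castSucc, j.castSucc, by simp, by simp [hij], ?_, ?_⟩
  · change insertLast p σ (Fin.castSucc ⟨j + 1, hj⟩) < _
    rw [insertLast_castSucc, insertLast_castSucc, Fin.succAbove_lt_succAbove_iff]
    exact h₁
  · simpa [Fin.succAbove_lt_succAbove_iff] using h₂

theorem last_le_of_avoids2d31_insertLast {m : ℕ} {p : Fin (m + 2)} {σ : Perm (Fin (m + 1))}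
    (h : Avoids2d31 (insertLast p σ)) : (σ (Fin.last m) : ℕ) ≤ p := by
  by_contra! hp
  -- the value `p + 1` of `insertLast p σ` comes before the last two entries
  set q : Fin (m + 1) := ⟨p, by omega⟩
  have hq : σ.symm q < Fin.last m := by
    refine Fin.val_lt_last fun hlast => ?_
    rw [symm_apply_eq] at hlast
    rw [← hlast] at hp
    exact lt_irrefl _ hp
  refine h ⟨(σ.symm q).castSucc, (Fin.last m).castSucc, by simp, by simpa using hq, ?_, ?_⟩
  · change insertLast p σ (Fin.last (m + 1)) < _
    rw [insertLast_last, insertLast_castSucc, apply_symm_apply,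
      Fin.succAbove_of_le_castSucc p q (Fin.le_def.2 le_rfl)]
    exact Fin.lt_def.2 (Nat.lt_succ_self _)
  · rw [insertLast_castSucc, insertLast_castSucc, apply_symm_apply,
      Fin.succAbove_lt_succAbove_iff, Fin.lt_def]
    exact hp

theorem avoids2d31_insertLast {m : ℕ} {p : Fin (m + 2)} {σ : Perm (Fin (m + 1))}
    (hσ : Avoids2d31 σ) (hp : (σ (Fin.last m) : ℕ) ≤ p) : Avoids2d31 (insertLast p σ) := by
  rintro ⟨i, j, hj, hij, h₁, h₂⟩
  obtain ⟨j, rfl⟩ := Fin.exists_castSucc_eq (i := j).2 fun h => by simp [h] at hj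
  obtain ⟨i, rfl⟩ := Fin.exists_castSucc_eq.2 (Fin.ne_last_of_lt hij)
  rw [Fin.castSucc_lt_castSucc_iff] at hij
  rw [insertLast_castSucc, insertLast_castSucc, Fin.succAbove_lt_succAbove_iff] at h₂
  rcases Fin.eq_castSucc_or_eq_last j with ⟨j, rfl⟩ | rfl
  · change insertLast p σ (Fin.castSucc j.succ) < _ at h₁
    rw [insertLast_castSucc, insertLast_castSucc, Fin.succAbove_lt_succAbove_iff] at h₁
    exact hσ ⟨i, j.castSucc, by simp, hij, h₁, h₂⟩
  · change insertLast p σ (Fin.last (m + 1)) < _ at h₁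
    rw [insertLast_last, insertLast_castSucc, Fin.lt_succAbove_iff_le_castSucc, Fin.le_def,
      Fin.val_castSucc] at h₁
    rw [Fin.lt_def] at h₂
    omega

theorem avoids2d31_insertLast_iff {m : ℕ} {p : Fin (m + 2)} {σ : Perm (Fin (m + 1))} :
    Avoids2d31 (insertLast p σ) ↔ Avoids2d31 σ ∧ (σ (Fin.last m) : ℕ) ≤ p :=
  ⟨fun h => ⟨avoids2d31_of_insertLast h, last_le_of_avoids2d31_insertLast h⟩,
    fun h => avoids2d31_insertLast h.1 h.2⟩

end Equiv.Perm

-- The paper's count for `n = m + 1` and `k = K + 1`.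
noncomputable def numAvoidersEndingAt (m K : ℕ) : ℕ :=
  Nat.card {π : Perm (Fin (m + 1)) // Avoids2d31 π ∧ (π (Fin.last m) : ℕ) = K}

noncomputable def numAvoidersEndingAtMost (m K : ℕ) : ℕ :=
  Nat.card {π : Perm (Fin (m + 1)) // Avoids2d31 π ∧ (π (Fin.last m) : ℕ) ≤ K}

theorem numAvoidersEndingAt_succ {m K : ℕ} (hK : K ≤ m + 1) :
    numAvoidersEndingAt (m + 1) K = numAvoidersEndingAtMost m K := by
  let p : Fin (m + 2) := ⟨K, by omega⟩
  let f : {σ : Perm (Fin (m + 1)) // Avoids2d31 σ ∧ (σ (Fin.last m) : ℕ) ≤ K} →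
      {π : Perm (Fin (m + 2)) // Avoids2d31 π ∧ (π (Fin.last (m + 1)) : ℕ) = K} :=
    fun σ => ⟨σ.1.insertLast p, Perm.avoids2d31_insertLast_iff.2 σ.2, by simp [p]⟩
  have hf : Function.Bijective f := by
    refine ⟨fun σ τ h => Subtype.ext <| Perm.insertLast_injective p congr(($h).1), ?_⟩
    rintro ⟨π, hπ, hlast⟩
    obtain ⟨σ, rfl⟩ := Perm.exists_insertLast_eq (p := p) (Fin.ext hlast)
    exact ⟨⟨σ, Perm.avoids2d31_insertLast_iff.1 hπ⟩, rfl⟩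
  exact (Nat.card_congr (Equiv.ofBijective f hf)).symm

theorem numAvoidersEndingAtMost_zero (m : ℕ) :
    numAvoidersEndingAtMost m 0 = numAvoidersEndingAt m 0 :=
  Nat.card_congr (subtypeEquivRight fun _ => by rw [Nat.le_zero])

theorem numAvoidersEndingAtMost_succ (m K : ℕ) :
    numAvoidersEndingAtMost m (K + 1) =
      numAvoidersEndingAtMost m K + numAvoidersEndingAt m (K + 1) := by
  classical
  have hdisj :
      Disjoint (fun π : Perm (Fin (m + 1)) => Avoids2d31 π ∧ (π (Fin.last m) : ℕ) ≤ K)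
        (fun π => Avoids2d31 π ∧ (π (Fin.last m) : ℕ) = K + 1) := by
    refine Pi.disjoint_iff.2 fun π => Prop.disjoint_iff.2 ?_
    rintro ⟨⟨-, hle⟩, -, heq⟩
    omega
  rw [numAvoidersEndingAtMost, numAvoidersEndingAtMost, numAvoidersEndingAt, ← Nat.card_sum,
    ← Nat.card_congr (subtypeOrEquiv _ _ hdisj)]
  exact Nat.card_congr (subtypeEquivRight fun _ => by rw [Nat.le_succ_iff, and_or_left])

theorem numAvoidersEndingAt_eq_zero {m K : ℕ} (hK : m < K) : numAvoidersEndingAt m K = 0 :=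
  Nat.card_eq_zero.2 <| Or.inl ⟨fun π => by have := (π.1 (Fin.last m)).isLt; omega⟩

theorem numAvoidersEndingAt_zero_zero : numAvoidersEndingAt 0 0 = 1 := by
  have h (π : Perm (Fin 1)) : Avoids2d31 π ∧ (π (Fin.last 0) : ℕ) = 0 :=
    ⟨fun ⟨_, j, hj, _⟩ => by omega, by simp⟩
  rw [numAvoidersEndingAt, Nat.card_congr (subtypeUnivEquiv h)]
  simp

theorem numAvoidersEndingAt_succ_zero (m : ℕ) :
    numAvoidersEndingAt (m + 1) 0 = numAvoidersEndingAt m 0 := by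
  rw [numAvoidersEndingAt_succ (Nat.zero_le _), numAvoidersEndingAtMost_zero]

theorem numAvoidersEndingAt_succ_succ {m K : ℕ} (hK : K ≤ m) :
    numAvoidersEndingAt (m + 1) (K + 1) =
      numAvoidersEndingAt (m + 1) K + numAvoidersEndingAt m (K + 1) := by
  rw [numAvoidersEndingAt_succ (by omega), numAvoidersEndingAt_succ (by omega),
    numAvoidersEndingAtMost_succ]

def ballot (m K : ℕ) : ℤ := (m + K).choose m - (m + K).choose (m + 1)

theorem ballot_zero_right (m : ℕ) : ballot m 0 = 1 := by
  simp [ballot]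

theorem ballot_succ_self (m : ℕ) : ballot m (m + 1) = 0 := by
  rw [ballot, show m + (m + 1) = 2 * m + 1 by ring, Nat.choose_symm_half, sub_self]

theorem ballot_succ_succ (m K : ℕ) :
    ballot (m + 1) (K + 1) = ballot (m + 1) K + ballot m (K + 1) := by
  simp only [ballot, show m + 1 + (K + 1) = m + K + 1 + 1 by ring,
    show m + 1 + K = m + K + 1 by ring, show m + (K + 1) = m + K + 1 by ring,
    Nat.choose_succ_succ']
  push_cast
  ring

theorem mul_ballot (m K : ℕ) : (m + 1 : ℤ) * ballot m K = (m + 1 - K) * (m + K).choose m := by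
  have h := Nat.choose_succ_right_eq (m + K) m
  rw [Nat.add_sub_cancel_left] at h
  rw [ballot]
  have h' : ((m + K).choose (m + 1) * (m + 1) : ℤ) = (m + K).choose m * K := by exact_mod_cast h
  linear_combination (-1 : ℤ) * h'

theorem numAvoidersEndingAt_eq_ballot {m K : ℕ} (hK : K ≤ m + 1) :
    (numAvoidersEndingAt m K : ℤ) = ballot m K := by
  induction m generalizing K with
  | zero =>
    rcases Nat.le_one_iff_eq_zero_or_eq_one.1 hK with rfl | rfl
    · simp [numAvoidersEndingAt_zero_zero, ballot_zero_right]
    · simp [numAvoidersEndingAt_eq_zero, ballot_succ_self]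
  | succ m ihm =>
    induction K with
    | zero =>
      rw [numAvoidersEndingAt_succ_zero, ihm (Nat.zero_le _), ballot_zero_right,
        ballot_zero_right]
    | succ K ihK =>
      rcases Nat.lt_or_eq_of_le hK with hK | hK
      · rw [numAvoidersEndingAt_succ_succ (by omega), Nat.cast_add, ihK (by omega),
          ihm (by omega), ballot_succ_succ]
      · rw [show K + 1 = m + 1 + 1 by omega, numAvoidersEndingAt_eq_zero (by omega),
          ballot_succ_self, Nat.cast_zero]

theorem mul_numAvoidersEndingAt {m K : ℕ} (hK : K ≤ m + 1) :
    (m + 1) * numAvoidersEndingAt m K = (m + 1 - K) * (m + K).choose m := by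
  zify [hK]
  rw [numAvoidersEndingAt_eq_ballot hK, mul_ballot]

theorem ballot_distribution (n k : ℕ) (hn : 1 ≤ n) (hk1 : 1 ≤ k) (hkn : k ≤ n) :
    n * Nat.card {π : Equiv.Perm (Fin n) // Avoids2d31 π ∧ π ⟨n - 1, by omega⟩ = ⟨k - 1, by omega⟩} = (n - k + 1) * (n + k - 2).choose (n - 1) := by
  obtain ⟨m, rfl⟩ : ∃ m, n = m + 1 := ⟨n - 1, by omega⟩
  obtain ⟨K, rfl⟩ : ∃ K, k = K + 1 := ⟨k - 1, by omega⟩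
  have hcard : Nat.card {π : Perm (Fin (m + 1)) //
      Avoids2d31 π ∧ π ⟨m + 1 - 1, by omega⟩ = ⟨K + 1 - 1, by omega⟩} =
        numAvoidersEndingAt m K :=
    Nat.card_congr (subtypeEquivRight fun _ => by simp [Fin.ext_iff, Fin.last])
  rw [hcard, mul_numAvoidersEndingAt (by omega), show m + 1 + (K + 1) - 2 = m + K by omega,
    show m + 1 - (K + 1) + 1 = m + 1 - K by omega, Nat.add_sub_cancel]
end
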